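/- Let r ≥ 2, σ ∈ Σ_r, M = M(σ), and let A P A₁ be a billiard path in M with A, A₁ ∈ Int(M) and P ∈ ∂M. For any ε > 0 there exists δ > 0 such that if P̃ is a point on the segment AP or on the segment PA₁ with dist(P, P̃) < δ, then there exists σ̃ ∈ Σ_r with d_r(σ, σ̃) < ε such that A P̃ A₁ is a billiard path for the table M(σ̃). -/

import Mathlib

noncomputable section

open Set

/-- Points of the plane. -/
abbrev Pt : Type := EuclideanSpace ℝ (Fin 2)

/-- Rotation of a plane vector by +90 degrees (counterclockwise). -/
def rot90 (w : Pt) : Pt := (WithLp.equiv 2 (Fin 2 → ℝ)).symm ![-(w 1), w 0]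

/-- A simple closed `C^r` curve in the plane with positive curvature, parametrized at
constant speed by `S¹ = ℝ/ℤ`, oriented counterclockwise.  Positive curvature together with
counterclockwise orientation is encoded by positivity of the cross product `σ' × σ''`. -/
structure ClosedCurve (r : ℕ) where
  toFun : ℝ → Pt
  contDiff : ContDiff ℝ r toFun
  periodic : Function.Periodic toFun 1
  inj : ∀ ⦃s t : ℝ⦄, s ∈ Ico (0:ℝ) 1 → t ∈ Ico (0:ℝ) 1 → toFun s = toFun t → s = t
  constSpeed : ∃ c : ℝ, 0 < c ∧ ∀ s : ℝ, ‖deriv toFun s‖ = c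
  posCurv : ∀ s : ℝ, 0 < deriv toFun s 0 * deriv (deriv toFun) s 1
      - deriv toFun s 1 * deriv (deriv toFun) s 0

namespace ClosedCurve

variable {r : ℕ}

/-- The boundary `∂M(σ)` of the billiard table: the image of the curve. -/
def boundary (σ : ClosedCurve r) : Set Pt := Set.range σ.toFun

/-- The billiard table `M(σ)`: the compact convex region bounded by `σ`. -/
def table (σ : ClosedCurve r) : Set Pt := convexHull ℝ σ.boundary

/-- Unit tangent vector at parameter `s`. -/
def unitTangent (σ : ClosedCurve r) (s : ℝ) : Pt := ‖deriv σ.toFun s‖⁻¹ • deriv σ.toFun s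

/-- Inward unit normal at parameter `s` (for a counterclockwise curve). -/
def inwardNormal (σ : ClosedCurve r) (s : ℝ) : Pt := rot90 (σ.unitTangent s)

/-- Curvature at parameter `s`. -/
def curvatureAt (σ : ClosedCurve r) (s : ℝ) : ℝ :=
  (deriv σ.toFun s 0 * deriv (deriv σ.toFun) s 1
    - deriv σ.toFun s 1 * deriv (deriv σ.toFun) s 0) / ‖deriv σ.toFun s‖ ^ 3

end ClosedCurve

/-- The `C^k` distance `d_k` between two closed curves (given by constant-speed
parametrizations `f`, `g` of period 1): the infimum over basepoint shifts `c` of the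
`C^k` distance on `[0,1]` between `t ↦ f (t + c)` and `g`. -/
def ckDist (k : ℕ) (f g : ℝ → Pt) : ℝ :=
  sInf {d : ℝ | ∃ c : ℝ, d = ⨆ j : Fin (k+1), ⨆ s : Icc (0:ℝ) 1,
    ‖iteratedDeriv (j : ℕ) (fun t => f (t + c)) (s : ℝ) - iteratedDeriv (j : ℕ) g (s : ℝ)‖}

/-- Unit vector pointing from `p` to `q`. -/
def unitDir (p q : Pt) : Pt := ‖q - p‖⁻¹ • (q - p)

/-- Reflection of the vector `w` across the line spanned by `T`. -/
def reflectAcross (T w : Pt) : Pt := (2 * (inner ℝ w T : ℝ) / (inner ℝ T T : ℝ)) • T - w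

/-- A billiard path from `x` to `y` in the table bounded by `σ`: a polygonal path
`x P₁ ⋯ P_m y` whose vertices lie on the boundary, whose segments lie in the table, and
which satisfies the reflection law at each vertex. -/
structure BilliardPath {r : ℕ} (σ : ClosedCurve r) (x y : Pt) where
  m : ℕ
  V : ℕ → Pt
  head_eq : V 0 = x
  last_eq : V (m + 1) = y
  consec_ne : ∀ i ≤ m, V i ≠ V (i + 1)
  vertex_mem : ∀ i, 1 ≤ i → i ≤ m → V i ∈ σ.boundary
  seg_sub : ∀ i ≤ m, segment ℝ (V i) (V (i + 1)) ⊆ σ.table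
  reflect : ∀ i, 1 ≤ i → i ≤ m → ∃ s : ℝ, σ.toFun s = V i ∧
    unitDir (V i) (V (i + 1)) = reflectAcross (deriv σ.toFun s) (unitDir (V (i - 1)) (V i))

namespace BilliardPath

variable {r : ℕ} {σ : ClosedCurve r} {x y : Pt}

/-- The `j`-th segment of a billiard path. -/
def seg (γ : BilliardPath σ x y) (j : ℕ) : Set Pt := segment ℝ (γ.V j) (γ.V (j + 1))

/-- `p` is a vertex of the path `γ`. -/
def IsVertex (γ : BilliardPath σ x y) (p : Pt) : Prop := ∃ i, 1 ≤ i ∧ i ≤ γ.m ∧ γ.V i = p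

end BilliardPath

/-- The `j`-th segment of a polygonal path with vertex sequence `V`. -/
def segOf (V : ℕ → Pt) (j : ℕ) : Set Pt := segment ℝ (V j) (V (j + 1))

/-- `n` polygonal paths from `x` to `y` (the `i`-th having `m i` interior vertices, with
vertex sequence `V i`) are in general position:
(GP1) no two paths share a vertex;
(GP2) no point occurs as a vertex on the same path more than once;
(GP3) no triple intersection points except `x` and `y`;
(GP4) `x` and `y` are not interior points of any of the paths. -/
def GenPos (x y : Pt) {n : ℕ} (m : Fin n → ℕ) (V : Fin n → ℕ → Pt) : Prop :=
  (∀ i j : Fin n, i ≠ j → ∀ a b : ℕ, 1 ≤ a → a ≤ m i → 1 ≤ b → b ≤ m j → V i a ≠ V j b) ∧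
  (∀ i : Fin n, ∀ a b : ℕ, 1 ≤ a → a ≤ m i → 1 ≤ b → b ≤ m i → V i a = V i b → a = b) ∧
  (¬ ∃ z : Pt, z ≠ x ∧ z ≠ y ∧ ∃ i₁ i₂ i₃ : Fin n, ∃ j₁ j₂ j₃ : ℕ,
    j₁ ≤ m i₁ ∧ j₂ ≤ m i₂ ∧ j₃ ≤ m i₃ ∧
    segOf (V i₁) j₁ ≠ segOf (V i₂) j₂ ∧ segOf (V i₁) j₁ ≠ segOf (V i₃) j₃ ∧
    segOf (V i₂) j₂ ≠ segOf (V i₃) j₃ ∧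
    z ∈ segOf (V i₁) j₁ ∧ z ∈ segOf (V i₂) j₂ ∧ z ∈ segOf (V i₃) j₃) ∧
  (∀ i : Fin n, ∀ j ≤ m i, (x ∈ segOf (V i) j → j = 0) ∧ (y ∈ segOf (V i) j → j = m i))

/-- The non-collinearity condition (NC): no two distinct vertices are collinear with `y`. -/
def NonCollinearCond (y : Pt) {n : ℕ} (m : Fin n → ℕ) (V : Fin n → ℕ → Pt) : Prop :=
  ∀ (i₁ i₂ : Fin n) (j₁ j₂ : ℕ), 1 ≤ j₁ → j₁ ≤ m i₁ → 1 ≤ j₂ → j₂ ≤ m i₂ →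
    V i₁ j₁ ≠ V i₂ j₂ → ¬ Collinear ℝ ({V i₁ j₁, V i₂ j₂, y} : Set Pt)

/-- `n` billiard paths are in general position. -/
def InGenPos {r n : ℕ} {σ : ClosedCurve r} {x y : Pt}
    (γ : Fin n → BilliardPath σ x y) : Prop :=
  GenPos x y (fun i => (γ i).m) (fun i => (γ i).V)

/-- Distance between two polygonal paths with `m` interior vertices each. -/
def polyDist (m : ℕ) (V W : ℕ → Pt) : ℝ := ⨆ i : Fin (m + 2), dist (V (i : ℕ)) (W (i : ℕ))

/-- The pair `(x, y)` is secure in the table bounded by `σ`: some finite subset of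
`M(σ) \ {x, y}` meets every billiard path from `x` to `y`. -/
def SecurePair {r : ℕ} (σ : ClosedCurve r) (x y : Pt) : Prop :=
  ∃ B : Finset Pt, (↑B : Set Pt) ⊆ σ.table \ {x, y} ∧
    ∀ γ : BilliardPath σ x y, ∃ p ∈ B, ∃ j ≤ γ.m, p ∈ γ.seg j

/-- A `C^k` family of oriented lines `u ↦ {base u + t • dir u}`, `u ∈ [a, b]`. -/
structure LineFamily (k : ℕ) where
  a : ℝ
  b : ℝ
  lt : a < b
  base : ℝ → Pt
  dir : ℝ → Pt
  smooth_base : ContDiff ℝ k base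
  smooth_dir : ContDiff ℝ k dir
  unit_dir : ∀ u : ℝ, ‖dir u‖ = 1

namespace LineFamily

variable {k : ℕ}

/-- The parameter interval of the family. -/
def I (F : LineFamily k) : Set ℝ := Icc F.a F.b

/-- Non-degeneracy: if `dir' u = 0` then `base' u` is not a scalar multiple of `dir u`. -/
def Nondegenerate (F : LineFamily k) : Prop :=
  ∀ u ∈ F.I, deriv F.dir u = 0 → ∀ c : ℝ, deriv F.base u ≠ c • F.dir u

/-- The family focuses (in linear approximation) at the point `p` at parameter `u₀`. -/
def FocusesAt (F : LineFamily k) (u₀ : ℝ) (p : Pt) : Prop :=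
  deriv F.dir u₀ ≠ 0 ∧
  p = F.base u₀ + (-((inner ℝ (deriv F.base u₀) (deriv F.dir u₀) : ℝ) /
    (inner ℝ (deriv F.dir u₀) (deriv F.dir u₀) : ℝ))) • F.dir u₀

end LineFamily

/-- `G` is the family of oriented lines obtained by reflecting the family `F` from the
curve `σ`: the base point of `G` is the last boundary point hit along each line of `F`,
and the direction is reflected there. -/
def IsReflectionOf {r k : ℕ} (σ : ClosedCurve r) (F G : LineFamily k) : Prop :=
  G.a = F.a ∧ G.b = F.b ∧
  ∀ u ∈ F.I, ∃ t : ℝ,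
    G.base u = F.base u + t • F.dir u ∧
    G.base u ∈ σ.boundary ∧
    (∀ t' : ℝ, F.base u + t' • F.dir u ∈ σ.boundary → t' ≤ t) ∧
    ∃ s : ℝ, σ.toFun s = G.base u ∧
      G.dir u = F.dir u - (2 * (inner ℝ (σ.inwardNormal s) (F.dir u) : ℝ)) • σ.inwardNormal s

/-- The endpoints of the billiard path `τ` (from `p` to `q`, with `τ.m` reflections)
are conjugate along `τ` in the table bounded by `σ`. -/
def ConjugateAlong {r : ℕ} (σ : ClosedCurve r) {p q : Pt} (τ : BilliardPath σ p q) : Prop :=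
  ∃ (F : ℕ → LineFamily 1) (u₀ : ℝ),
    u₀ ∈ (F 0).I ∧ (F 0).Nondegenerate ∧
    (F 0).dir u₀ = unitDir p (τ.V 1) ∧
    (∃ t : ℝ, (F 0).base u₀ = p + t • unitDir p (τ.V 1)) ∧
    (∀ i < τ.m, IsReflectionOf σ (F i) (F (i + 1))) ∧
    (F 0).FocusesAt u₀ p ∧ (F τ.m).FocusesAt u₀ q

/-- The `C^k` distance `d_k` between two parametrized families of lines on `[a,b]`. -/
def famCkDist (k : ℕ) (a b : ℝ) (f g f' g' : ℝ → Pt) : ℝ :=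
  max (⨆ j : Fin (k+1), ⨆ s : Icc a b,
        ‖iteratedDeriv (j : ℕ) f (s : ℝ) - iteratedDeriv (j : ℕ) f' (s : ℝ)‖)
      (⨆ j : Fin (k+1), ⨆ s : Icc a b,
        ‖iteratedDeriv (j : ℕ) g (s : ℝ) - iteratedDeriv (j : ℕ) g' (s : ℝ)‖)

/-- `U` is an open subset of `S` in the `C^k` topology induced by the metric `d_k`. -/
def OpenIn {r : ℕ} (k : ℕ) (S U : Set (ClosedCurve r)) : Prop :=
  U ⊆ S ∧ ∀ σ ∈ U, ∃ ε > 0, ∀ τ ∈ S, ckDist k σ.toFun τ.toFun < ε → τ ∈ U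

/-- `U` is a dense subset of `S` in the `C^k` topology induced by the metric `d_k`. -/
def DenseIn {r : ℕ} (k : ℕ) (S U : Set (ClosedCurve r)) : Prop :=
  ∀ σ ∈ S, ∀ ε > 0, ∃ τ ∈ U, ckDist k σ.toFun τ.toFun < ε

/-- `A` is a dense `G_δ` subset of `S` in the `C^k` topology: a dense countable
intersection of open dense subsets of `S`. -/
def DenseGdeltaIn {r : ℕ} (k : ℕ) (S A : Set (ClosedCurve r)) : Prop :=
  (∃ U : ℕ → Set (ClosedCurve r), (∀ i, OpenIn k S (U i) ∧ DenseIn k S (U i)) ∧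
    A = ⋂ i, U i) ∧ DenseIn k S A

/-- `C¹` distance between maps on a compact set `K ⊆ ℝ²`. -/
def c1DistOn (K : Set Pt) (f g : Pt → Pt) : ℝ :=
  max (⨆ s : K, ‖f (s : Pt) - g (s : Pt)‖)
      (⨆ s : K, ‖fderivWithin ℝ f K (s : Pt) - fderivWithin ℝ g K (s : Pt)‖)


/-!
For `P'` near `P`, the tangent direction of `σ`, which turns with nonzero speed by positive
curvature, becomes parallel at some parameter `s` near `s₀` (where `σ s₀ = P`) to the bisector
of the directions `A → P'` and `P' → A₁`; so the reflection law at `P'` holds for the tangent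
`σ' s`. Translating `σ` by `P' - σ s` puts `σ s` at `P'` without changing tangents, moves the
curve by `‖P' - σ s‖` in `d_r`, and keeps `A`, `A₁` in the table. At normal incidence the
bisector vanishes, but then `A` and `A₁` lie on one ray from `P`, and every `P'` on that ray
sees the same directions as `P`, so `s = s₀` works.
-/

open Filter Topology
open scoped Pointwise

/-- `ClosedCurve.posCurv` reads `0 < cross σ' σ''`. -/
def cross (a b : Pt) : ℝ := a 0 * b 1 - a 1 * b 0

lemma inner_eq_fin_two (a b : Pt) : (inner ℝ a b : ℝ) = a 0 * b 0 + a 1 * b 1 := by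
  simp [PiLp.inner_apply, Fin.sum_univ_two, mul_comm]

lemma smul_eq_of_cross_eq_zero {a b : Pt} (h : cross a b = 0) (hb : b ≠ 0) :
    (inner ℝ a b / inner ℝ b b) • b = a := by
  have hbb : (inner ℝ b b : ℝ) ≠ 0 := inner_self_ne_zero.2 hb
  rw [inner_eq_fin_two] at hbb ⊢
  rw [inner_eq_fin_two]
  unfold cross at h
  ext i
  fin_cases i <;>
    simp only [Fin.zero_eta, Fin.mk_one, PiLp.smul_apply, smul_eq_mul] <;>
    rw [div_mul_eq_mul_div, div_eq_iff hbb]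
  · linear_combination (-b 1) * h
  · linear_combination b 0 * h

lemma HasDerivAt.cross_const {f : ℝ → Pt} {f' : Pt} {s : ℝ} (hf : HasDerivAt f f' s) (d : Pt) :
    HasDerivAt (fun t => cross (f t) d) (cross f' d) s := by
  have hcoord : ∀ i : Fin 2, HasDerivAt (fun t => f t i) (f' i) s := fun i =>
    (EuclideanSpace.proj i : Pt →L[ℝ] ℝ).hasFDerivAt.comp_hasDerivAt s hf
  exact ((hcoord 0).mul_const (d 1)).sub ((hcoord 1).mul_const (d 0))

lemma Continuous.cross {X : Type*} [TopologicalSpace X] {f g : X → Pt} (hf : Continuous f)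
    (hg : Continuous g) : Continuous (fun x => cross (f x) (g x)) := by
  simp only [_root_.cross]
  fun_prop

lemma reflectAcross_smul (T u : Pt) {c : ℝ} (hc : c ≠ 0) :
    reflectAcross (c • T) u = reflectAcross T u := by
  by_cases hT : T = 0
  · simp [hT]
  have hTT : (inner ℝ T T : ℝ) ≠ 0 := inner_self_ne_zero.2 hT
  simp only [reflectAcross, real_inner_smul_right, real_inner_smul_left, smul_smul]
  congr 2
  field_simp

lemma add_reflectAcross (T u : Pt) :
    u + reflectAcross T u = (2 * inner ℝ u T / inner ℝ T T) • T := by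
  simp [reflectAcross]

lemma reflectAcross_add_self {u v : Pt} (hu : ‖u‖ = 1) (hv : ‖v‖ = 1) (hne : u + v ≠ 0) :
    reflectAcross (u + v) u = v := by
  have huu : (inner ℝ u u : ℝ) = 1 := by simp [hu]
  have hvv : (inner ℝ v v : ℝ) = 1 := by simp [hv]
  have hsum : (inner ℝ (u + v) (u + v) : ℝ) = 2 * inner ℝ u (u + v) := by
    rw [real_inner_add_add_self, inner_add_right, huu, hvv]
    ring
  have hpos : (inner ℝ u (u + v) : ℝ) ≠ 0 := by
    intro h0
    rw [h0, mul_zero] at hsum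
    exact hne (inner_self_eq_zero.1 hsum)
  rw [reflectAcross, hsum, div_self (mul_ne_zero two_ne_zero hpos), one_smul, add_sub_cancel_left]

lemma reflectAcross_eq_of_cross_add_eq_zero {T u v : Pt} (hT : T ≠ 0) (hu : ‖u‖ = 1)
    (hv : ‖v‖ = 1) (hne : u + v ≠ 0) (h : cross T (u + v) = 0) : reflectAcross T u = v := by
  rw [← smul_eq_of_cross_eq_zero h hne] at hT ⊢
  rw [reflectAcross_smul _ _ (left_ne_zero_of_smul hT), reflectAcross_add_self hu hv hne]

lemma norm_unitDir {p q : Pt} (h : p ≠ q) : ‖unitDir p q‖ = 1 := by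
  rw [unitDir, norm_smul, norm_inv, norm_norm,
    inv_mul_cancel₀ (norm_ne_zero_iff.2 (sub_ne_zero.2 h.symm))]

lemma dist_smul_unitDir (p q : Pt) : dist p q • unitDir p q = q - p := by
  rcases eq_or_ne p q with rfl | h
  · simp
  rw [unitDir, smul_smul, dist_eq_norm',
    mul_inv_cancel₀ (norm_ne_zero_iff.2 (sub_ne_zero.2 h.symm)), one_smul]

lemma unitDir_eq_of_sub_eq_smul {p q u : Pt} {t : ℝ} (hu : ‖u‖ = 1) (ht : 0 < t)
    (h : q - p = t • u) : unitDir p q = u := by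
  rw [unitDir, h, norm_smul, hu, Real.norm_of_nonneg ht.le, mul_one, smul_smul,
    inv_mul_cancel₀ ht.ne', one_smul]

lemma ContinuousAt.unitDir {X : Type*} [TopologicalSpace X] {f g : X → Pt} {x : X}
    (hf : ContinuousAt f x) (hg : ContinuousAt g x) (hne : f x ≠ g x) :
    ContinuousAt (fun y => unitDir (f y) (g y)) x :=
  ((hg.sub hf).norm.inv₀ (norm_ne_zero_iff.2 (sub_ne_zero.2 hne.symm))).smul (hg.sub hf)

lemma exists_eq_sub_smul_of_mem_segment {P X Q u : Pt} {d : ℝ} (hd : 0 ≤ d)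
    (hX : X = P - d • u) (hQ : Q ∈ segment ℝ P X) : ∃ t : ℝ, 0 ≤ t ∧ Q = P - t • u := by
  rw [segment_eq_image'] at hQ
  obtain ⟨θ, hθ, rfl⟩ := hQ
  refine ⟨θ * d, mul_nonneg hθ.1 hd, ?_⟩
  rw [hX]
  module

lemma eventually_unitDir_eq_of_add_eq_zero {A A₁ P : Pt} (hAP : A ≠ P) (hPA₁ : P ≠ A₁)
    (h : unitDir A P + unitDir P A₁ = 0) :
    ∀ᶠ Q in 𝓝[segment ℝ A P ∪ segment ℝ P A₁] P,
      unitDir A Q = unitDir A P ∧ unitDir Q A₁ = unitDir P A₁ := by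
  set u := unitDir A P
  have hv : unitDir P A₁ = -u := eq_neg_of_add_eq_zero_right h
  have hu1 : ‖u‖ = 1 := norm_unitDir hAP
  have hPA : P - A = dist A P • u := (dist_smul_unitDir A P).symm
  have hA₁P : A₁ - P = dist P A₁ • -u := by rw [← hv, dist_smul_unitDir]
  have hA : A = P - dist A P • u := by linear_combination (norm := module) -hPA
  have hA₁ : A₁ = P - dist P A₁ • u := by linear_combination (norm := module) hA₁P
  have hpos : 0 < min (dist A P) (dist P A₁) := lt_min (dist_pos.2 hAP) (dist_pos.2 hPA₁)
  filter_upwards [self_mem_nhdsWithin, nhdsWithin_le_nhds (Metric.ball_mem_nhds P hpos)]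
    with Q hQ hQP
  obtain ⟨t, ht, rfl⟩ : ∃ t : ℝ, 0 ≤ t ∧ Q = P - t • u := by
    rcases hQ with hQ | hQ
    · exact exists_eq_sub_smul_of_mem_segment dist_nonneg hA (segment_symm ℝ A P ▸ hQ)
    · exact exists_eq_sub_smul_of_mem_segment dist_nonneg hA₁ hQ
  have htP : t < min (dist A P) (dist P A₁) := by
    simpa [dist_eq_norm, norm_smul, hu1, abs_of_nonneg ht] using hQP
  constructor
  · refine unitDir_eq_of_sub_eq_smul hu1 (sub_pos.2 (htP.trans_le (min_le_left _ _))) ?_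
    linear_combination (norm := module) hPA
  · rw [hv]
    refine unitDir_eq_of_sub_eq_smul (by rwa [norm_neg])
      (sub_pos.2 (htP.trans_le (min_le_right _ _))) ?_
    linear_combination (norm := module) hA₁P

lemma exists_mul_neg_of_hasDerivAt {f : ℝ → ℝ} {s₀ a : ℝ} (hf : HasDerivAt f a s₀)
    (ha : a ≠ 0) (h0 : f s₀ = 0) {η : ℝ} (hη : 0 < η) :
    ∃ η' ∈ Ioo 0 η, f (s₀ - η') * f (s₀ + η') < 0 := by
  have hslope : ∀ᶠ s in 𝓝[≠] s₀, 0 < a * slope f s₀ s :=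
    (hf.tendsto_slope.const_mul a).eventually_const_lt (mul_self_pos.2 ha)
  obtain ⟨ρ, hρ, hball⟩ := Metric.nhdsWithin_basis_ball.eventually_iff.1 hslope
  set η' := min (η / 2) (ρ / 2)
  have hη' : 0 < η' := lt_min (half_pos hη) (half_pos hρ)
  have hmem : ∀ s, |s - s₀| = η' → s ∈ Metric.ball s₀ ρ ∩ {s₀}ᶜ := fun s hs =>
    ⟨by rw [Metric.mem_ball, Real.dist_eq, hs]; linarith [min_le_right (η / 2) (ρ / 2)],
      fun h => by simp [show s = s₀ from h] at hs; linarith⟩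
  have hlo := hball (hmem (s₀ - η') (by simp [abs_of_pos hη']))
  have hhi := hball (hmem (s₀ + η') (by simp [abs_of_pos hη']))
  simp only [slope_def_field, h0, sub_zero, sub_sub_cancel_left, add_sub_cancel_left] at hlo hhi
  refine ⟨η', ⟨hη', by linarith [min_le_left (η / 2) (ρ / 2)]⟩, ?_⟩
  have hprod : f (s₀ - η') * f (s₀ + η') = -(η' ^ 2 / a ^ 2) *
      (a * (f (s₀ - η') / -η') * (a * (f (s₀ + η') / η'))) := by
    field_simp
  rw [hprod]
  exact mul_neg_of_neg_of_pos (neg_neg_of_pos (by positivity)) (mul_pos hlo hhi)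

lemma eventually_exists_zero_of_hasDerivAt {X : Type*} [TopologicalSpace X] {F : X → ℝ → ℝ}
    {x₀ : X} {s₀ a : ℝ} (hF : ∀ x, Continuous (F x)) (hFx : ∀ s, ContinuousAt (F · s) x₀)
    (hderiv : HasDerivAt (F x₀) a s₀) (ha : a ≠ 0) (hzero : F x₀ s₀ = 0) {η : ℝ}
    (hη : 0 < η) : ∀ᶠ x in 𝓝 x₀, ∃ s, dist s s₀ < η ∧ F x s = 0 := by
  obtain ⟨η', ⟨hη'0, hη'η⟩, hsign⟩ := exists_mul_neg_of_hasDerivAt hderiv ha hzero hη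
  filter_upwards [((hFx _).mul (hFx _)).eventually_lt_const hsign] with x hx
  have hle : s₀ - η' ≤ s₀ + η' := by linarith
  have hzero_mem : (0 : ℝ) ∈ F x '' Icc (s₀ - η') (s₀ + η') := by
    rcases mul_neg_iff.1 hx with ⟨hlo, hhi⟩ | ⟨hlo, hhi⟩
    · exact intermediate_value_Icc' hle (hF x).continuousOn ⟨hhi.le, hlo.le⟩
    · exact intermediate_value_Icc hle (hF x).continuousOn ⟨hlo.le, hhi.le⟩
  obtain ⟨s, hs, hFs⟩ := hzero_mem
  refine ⟨s, ?_, hFs⟩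
  rw [Real.dist_eq, abs_lt]
  constructor <;> linarith [hs.1, hs.2]

lemma ckDist_le {k : ℕ} {f g : ℝ → Pt} {C : ℝ} (hC : 0 ≤ C)
    (h : ∀ j ≤ k, ∀ s ∈ Icc (0 : ℝ) 1, ‖iteratedDeriv j f s - iteratedDeriv j g s‖ ≤ C) :
    ckDist k f g ≤ C := by
  unfold ckDist
  refine csInf_le_of_le ⟨0, ?_⟩ ⟨0, rfl⟩ ?_
  · rintro _ ⟨c, rfl⟩
    exact Real.iSup_nonneg fun j => Real.iSup_nonneg fun s => norm_nonneg _
  · simp only [add_zero]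
    exact ciSup_le fun j => Real.iSup_le (fun s => h j (Nat.lt_succ_iff.1 j.2) s s.2) hC

namespace ClosedCurve

variable {r : ℕ}

lemma deriv_ne_zero (σ : ClosedCurve r) (s : ℝ) : deriv σ.toFun s ≠ 0 := by
  obtain ⟨c, hc, hspeed⟩ := σ.constSpeed
  exact norm_pos_iff.1 (hspeed s ▸ hc)

lemma contDiff_deriv (σ : ClosedCurve r) (hr : 2 ≤ r) : ContDiff ℝ 1 (deriv σ.toFun) :=
  (σ.contDiff.of_le (by exact_mod_cast hr : ((1 + 1 : ℕ) : WithTop ℕ∞) ≤ r)).deriv'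

def translate (σ : ClosedCurve r) (w : Pt) : ClosedCurve r where
  toFun t := w + σ.toFun t
  contDiff := contDiff_const.add σ.contDiff
  periodic t := by simp only [σ.periodic t]
  inj _ _ hs ht h := σ.inj hs ht (add_left_cancel h)
  constSpeed := by simpa only [deriv_const_add'] using σ.constSpeed
  posCurv := by simpa only [deriv_const_add'] using σ.posCurv

lemma translate_toFun (σ : ClosedCurve r) (w : Pt) :
    (σ.translate w).toFun = fun t => w + σ.toFun t := rfl

lemma deriv_translate (σ : ClosedCurve r) (w : Pt) :
    deriv (σ.translate w).toFun = deriv σ.toFun :=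
  deriv_const_add' w

lemma table_translate (σ : ClosedCurve r) (w : Pt) :
    (σ.translate w).table = w +ᵥ σ.table := by
  rw [table, table, ← convexHull_vadd, boundary, boundary, Set.vadd_set_range]
  rfl

lemma eventually_mem_table_translate (σ : ClosedCurve r) {x : Pt}
    (hx : x ∈ interior σ.table) : ∀ᶠ w in 𝓝 0, x ∈ (σ.translate w).table := by
  have hlim : Tendsto (fun w : Pt => -w +ᵥ x) (𝓝 0) (𝓝 x) :=
    (by fun_prop : Continuous fun w : Pt => -w +ᵥ x).tendsto' 0 x (by simp)
  filter_upwards [hlim.eventually (mem_interior_iff_mem_nhds.1 hx)] with w hw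
  rwa [table_translate, Set.mem_vadd_set_iff_neg_vadd_mem]

lemma ckDist_translate_le (σ : ClosedCurve r) (k : ℕ) (w : Pt) :
    ckDist k σ.toFun (σ.translate w).toFun ≤ ‖w‖ := by
  refine ckDist_le (norm_nonneg w) fun j _ s _ => ?_
  rw [translate_toFun]
  rcases j.eq_zero_or_pos with rfl | hj
  · simp
  · simp [iteratedDeriv_const_add hj]

lemma eventually_ckDist_translate_lt (σ : ClosedCurve r) (k : ℕ) {ε : ℝ} (hε : 0 < ε) :
    ∀ᶠ w in 𝓝 0, ckDist k σ.toFun (σ.translate w).toFun < ε := by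
  filter_upwards [Metric.ball_mem_nhds 0 hε] with w hw
  exact (σ.ckDist_translate_le k w).trans_lt (by simpa using hw)

lemma eventually_exists_reflecting_of_add_ne_zero (σ : ClosedCurve r) (hr : 2 ≤ r)
    {A A₁ P : Pt} {s₀ η : ℝ} (hAP : A ≠ P) (hPA₁ : P ≠ A₁)
    (hlaw : unitDir P A₁ = reflectAcross (deriv σ.toFun s₀) (unitDir A P))
    (hne : unitDir A P + unitDir P A₁ ≠ 0) (hη : 0 < η) :
    ∀ᶠ Q in 𝓝 P, ∃ s, dist s s₀ < η ∧
      unitDir Q A₁ = reflectAcross (deriv σ.toFun s) (unitDir A Q) := by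
  set T₀ := deriv σ.toFun s₀
  set d₀ := unitDir A P + unitDir P A₁
  set μ := 2 * inner ℝ (unitDir A P) T₀ / inner ℝ T₀ T₀
  have hd₀ : d₀ = μ • T₀ := by rw [show d₀ = _ + _ from rfl, hlaw, add_reflectAcross]
  have hμ : μ ≠ 0 := fun h => hne (by rw [hd₀, h, zero_smul])
  have hσ' := σ.contDiff_deriv hr
  -- The tangent direction turns at speed `cross σ' σ'' > 0`, so it crosses the direction `d₀`.
  have hzeros : ∀ᶠ d in 𝓝 d₀, ∃ s, dist s s₀ < η ∧ cross (deriv σ.toFun s) d = 0 := by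
    refine eventually_exists_zero_of_hasDerivAt (F := fun d s => cross (deriv σ.toFun s) d)
      (fun d => hσ'.continuous.cross continuous_const)
      (fun s => (continuous_const.cross continuous_id).continuousAt)
      ((hσ'.differentiable one_ne_zero s₀).hasDerivAt.cross_const d₀) ?_ ?_ hη
    · have hκ := σ.posCurv s₀
      rw [hd₀]
      simp only [cross, PiLp.smul_apply, smul_eq_mul]
      intro h
      apply hμ
      nlinarith
    · simp only [hd₀, cross, PiLp.smul_apply, smul_eq_mul]
      ring
  have hd : ContinuousAt (fun Q => unitDir A Q + unitDir Q A₁) P :=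
    (continuousAt_const.unitDir continuousAt_id hAP).add
      (continuousAt_id.unitDir continuousAt_const hPA₁)
  filter_upwards [hd.eventually hzeros, hd.eventually_ne hne, eventually_ne_nhds hAP.symm,
    eventually_ne_nhds hPA₁] with Q ⟨s, hs, hcross⟩ hQ hAQ hQA₁
  exact ⟨s, hs, (reflectAcross_eq_of_cross_add_eq_zero (σ.deriv_ne_zero s)
    (norm_unitDir (Ne.symm hAQ)) (norm_unitDir hQA₁) hQ hcross).symm⟩

lemma eventually_exists_reflecting (σ : ClosedCurve r) (hr : 2 ≤ r) {A A₁ P : Pt}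
    {s₀ η : ℝ} (hAP : A ≠ P) (hPA₁ : P ≠ A₁)
    (hlaw : unitDir P A₁ = reflectAcross (deriv σ.toFun s₀) (unitDir A P)) (hη : 0 < η) :
    ∀ᶠ Q in 𝓝[segment ℝ A P ∪ segment ℝ P A₁] P, ∃ s, dist s s₀ < η ∧
      unitDir Q A₁ = reflectAcross (deriv σ.toFun s) (unitDir A Q) := by
  by_cases hne : unitDir A P + unitDir P A₁ = 0
  · filter_upwards [eventually_unitDir_eq_of_add_eq_zero hAP hPA₁ hne] with Q ⟨hAQ, hQA₁⟩
    exact ⟨s₀, by simpa using hη, by rw [hAQ, hQA₁, hlaw]⟩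
  · exact nhdsWithin_le_nhds
      (σ.eventually_exists_reflecting_of_add_ne_zero hr hAP hPA₁ hlaw hne hη)

end ClosedCurve

namespace BilliardPath

variable {r : ℕ} {σ : ClosedCurve r} {x y : Pt}

lemma reflect_of_m_eq_one (γ : BilliardPath σ x y) (hm : γ.m = 1) :
    x ≠ γ.V 1 ∧ γ.V 1 ≠ y ∧ ∃ s, σ.toFun s = γ.V 1 ∧
      unitDir (γ.V 1) y = reflectAcross (deriv σ.toFun s) (unitDir x (γ.V 1)) := by
  have hV₂ : γ.V 2 = y := by simpa [hm] using γ.last_eq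
  refine ⟨?_, ?_, ?_⟩
  · simpa [γ.head_eq] using γ.consec_ne 0 (by omega)
  · simpa [hV₂] using γ.consec_ne 1 hm.ge
  · simpa [γ.head_eq, hV₂] using γ.reflect 1 le_rfl hm.ge

lemma exists_of_reflection {p : Pt} {s : ℝ} (hs : σ.toFun s = p) (hx : x ∈ σ.table)
    (hy : y ∈ σ.table) (hxp : x ≠ p) (hpy : p ≠ y)
    (hlaw : unitDir p y = reflectAcross (deriv σ.toFun s) (unitDir x p)) :
    ∃ γ : BilliardPath σ x y, γ.m = 1 ∧ γ.V 1 = p := by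
  have hp : p ∈ σ.table := subset_convexHull ℝ _ ⟨s, hs⟩
  refine ⟨⟨1, fun i => if i = 0 then x else if i = 1 then p else y, rfl, rfl, ?_, ?_, ?_, ?_⟩,
    rfl, rfl⟩
  · intro i hi
    interval_cases i <;> simpa
  · intro i h1 h2
    obtain rfl : i = 1 := le_antisymm h2 h1
    exact ⟨s, hs⟩
  · intro i hi
    interval_cases i
    · simpa [ClosedCurve.table] using (convex_convexHull ℝ _).segment_subset hx hp
    · simpa [ClosedCurve.table] using (convex_convexHull ℝ _).segment_subset hp hy
  · intro i h1 h2
    obtain rfl : i = 1 := le_antisymm h2 h1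
    exact ⟨s, hs, by simpa using hlaw⟩

end BilliardPath

/-- perturbing an initial segment. Given a billiard path `A P A₁` with
`A, A₁ ∈ Int M` and `P ∈ ∂M`, for every `ε > 0` there is `δ > 0` such that for every
point `P'` on segment `AP` or `PA₁` with `dist P P' < δ`, there is `σ' ∈ Σ_r` with
`d_r(σ, σ') < ε` for which `A P' A₁` is a billiard path. -/
theorem perturb_initial_segment
    (r : ℕ) (hr : 2 ≤ r) (σ : ClosedCurve r) (A A₁ : Pt)
    (hA : A ∈ interior σ.table) (hA₁ : A₁ ∈ interior σ.table)
    (γ : BilliardPath σ A A₁) (hm : γ.m = 1) (P : Pt) (hP : γ.V 1 = P)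
    (ε : ℝ) (hε : 0 < ε) :
    ∃ δ > (0:ℝ), ∀ P' : Pt, P' ∈ segment ℝ A P ∪ segment ℝ P A₁ → dist P P' < δ →
      ∃ σ' : ClosedCurve r, ckDist r σ.toFun σ'.toFun < ε ∧
        ∃ γ' : BilliardPath σ' A A₁, γ'.m = 1 ∧ γ'.V 1 = P' := by
  obtain ⟨hAP, hPA₁, s₀, hs₀, hlaw⟩ := hP ▸ γ.reflect_of_m_eq_one hm
  obtain ⟨ρ, hρ, htranslate⟩ := Metric.eventually_nhds_iff.1
    ((σ.eventually_ckDist_translate_lt r hε).and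
      ((σ.eventually_mem_table_translate hA).and (σ.eventually_mem_table_translate hA₁)))
  obtain ⟨η, hη, hsP⟩ := Metric.continuousAt_iff.1
    (σ.contDiff.continuous.continuousAt (x := s₀)) (ρ / 2) (half_pos hρ)
  have hnear : ∀ᶠ Q in 𝓝[segment ℝ A P ∪ segment ℝ P A₁] P, ∃ σ' : ClosedCurve r,
      ckDist r σ.toFun σ'.toFun < ε ∧ ∃ γ' : BilliardPath σ' A A₁, γ'.m = 1 ∧ γ'.V 1 = Q := by
    filter_upwards [σ.eventually_exists_reflecting hr hAP hPA₁ hlaw hη,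
      nhdsWithin_le_nhds (Metric.ball_mem_nhds P (half_pos hρ)),
      nhdsWithin_le_nhds (eventually_ne_nhds hAP.symm),
      nhdsWithin_le_nhds (eventually_ne_nhds hPA₁)] with Q ⟨s, hs, hQlaw⟩ hQP hAQ hQA₁
    have hw : dist (Q - σ.toFun s) 0 < ρ := by
      rw [dist_zero_right, ← dist_eq_norm]
      calc dist Q (σ.toFun s) ≤ dist Q P + dist (σ.toFun s) P := dist_triangle_right _ _ _
        _ < ρ / 2 + ρ / 2 := add_lt_add hQP (hs₀ ▸ hsP hs)
        _ = ρ := add_halves ρ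
    obtain ⟨hck, hAt, hA₁t⟩ := htranslate hw
    exact ⟨_, hck, BilliardPath.exists_of_reflection (s := s) (by simp [σ.translate_toFun])
      hAt hA₁t (Ne.symm hAQ) hQA₁ (by rwa [σ.deriv_translate])⟩
  obtain ⟨δ, hδ, hδP⟩ := Metric.nhdsWithin_basis_ball.eventually_iff.1 hnear
  exact ⟨δ, hδ, fun Q hQS hQP => hδP ⟨by rwa [Metric.mem_ball, dist_comm], hQS⟩⟩
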